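/- arXiv:1104.4896 — 3 statements merged into one kernel-verified Lean document; each statement's English description precedes it below -/
import Mathlib

section
/- Let X be a topological space, A ⊆ X, and α an ordinal such that CD^α(A) ⊋ CD^{α+1}(A) ⊋ CD^{α+2}(A) (both inclusions strict). Then the set difference CD^α(A) \ CD^{α+1}(A) is uncountable (has cardinality at least ℵ₁). -/
/-- The condensation derivative: the set of condensation points of `A`,
i.e. points every neighborhood of which meets `A` in an uncountable set. -/
def CD (X : Type*) [TopologicalSpace X] (A : Set X) : Set X :=
  {p | ∀ U ∈ nhds p, ¬(U ∩ A).Countable}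

/-- Transfinite iterates of the condensation derivative. -/
noncomputable def CDiter (X : Type*) [TopologicalSpace X] (A : Set X) : Ordinal → Set X :=
  fun o => Ordinal.limitRecOn o A (fun _ ih => CD X ih)
    (fun o _ ih => ⋂ (b : Set.Iio o), ih b.1 b.2)

/-! Condensation points do not see countable sets: if `B \ C` is countable, every condensation
point of `B` is one of `C`. So if `CD^α(A) \ CD^{α+1}(A)` were countable, then
`CD^{α+1}(A) ⊆ CD^{α+2}(A)`, against the second strict inclusion. -/

theorem CD_subset_CD_of_countable_diff {X : Type*} [TopologicalSpace X] {B C : Set X}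
    (hBC : (B \ C).Countable) : CD X B ⊆ CD X C := by
  intro p hp U hU hUC
  have hcover : U ∩ B ⊆ (U ∩ C) ∪ (B \ C) := fun x ⟨hxU, hxB⟩ =>
    (em (x ∈ C)).imp (fun hxC => ⟨hxU, hxC⟩) (fun hxC => ⟨hxB, hxC⟩)
  exact hp U hU ((hUC.union hBC).mono hcover)

theorem CDiter_succ {X : Type*} [TopologicalSpace X] (A : Set X) (o : Ordinal) :
    CDiter X A (o + 1) = CD X (CDiter X A o) := by
  rw [CDiter, Ordinal.limitRecOn_add_one]
  rfl

theorem CDiter_add_two {X : Type*} [TopologicalSpace X] (A : Set X) (o : Ordinal) :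
    CDiter X A (o + 2) = CD X (CDiter X A (o + 1)) := by
  rw [← one_add_one_eq_two, ← add_assoc, CDiter_succ]

theorem cditer_diff_uncountable_general {X : Type*} [TopologicalSpace X] {A : Set X}
    {α : Ordinal}
    (h2 : CDiter X A (α + 2) ⊂ CDiter X A (α + 1)) :
    ¬(CDiter X A α \ CDiter X A (α + 1)).Countable := by
  intro hcount
  apply h2.not_subset
  rw [CDiter_add_two, CDiter_succ]
  exact CD_subset_CD_of_countable_diff (CDiter_succ A α ▸ hcount)

theorem cditer_diff_uncountable {X : Type*} [TopologicalSpace X] {A : Set X}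
    {α : Ordinal} (h1 : CDiter X A (α + 1) ⊂ CDiter X A α)
    (h2 : CDiter X A (α + 2) ⊂ CDiter X A (α + 1)) :
    ¬(CDiter X A α \ CDiter X A (α + 1)).Countable :=
  cditer_diff_uncountable_general h2
end

section
/- Let X be a metric locally compact space. Then for every A ⊆ X, CD(CD(A)) = CD(A); i.e., the condensation derivative on a locally compact metric space is idempotent. -/
open Set Filter Topology TopologicalSpace

section TopologicalSpace

variable {X : Type*} [TopologicalSpace X]

theorem CD_mono {A B : Set X} (h : A ⊆ B) : CD X A ⊆ CD X B :=
  fun _ hp U hU hc ↦ hp U hU (hc.mono (inter_subset_inter_right U h))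

theorem CD_subset_closure (A : Set X) : CD X A ⊆ closure A := fun _ hp ↦
  mem_closure_iff_nhds.mpr fun U hU ↦ not_not.mp fun h ↦
    hp U hU (not_nonempty_iff_eq_empty.mp h ▸ countable_empty)

theorem isClosed_CD (A : Set X) : IsClosed (CD X A) := by
  refine closure_subset_iff_isClosed.mp fun p hp U hU hc ↦ ?_
  obtain ⟨V, hVU, hV, hpV⟩ := mem_nhds_iff.mp hU
  obtain ⟨q, hqV, hq⟩ := mem_closure_iff.mp hp V hV hpV
  exact hq V (hV.mem_nhds hqV) (hc.mono (inter_subset_inter_left A hVU))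

theorem CD_CD_subset (A : Set X) : CD X (CD X A) ⊆ CD X A :=
  (CD_subset_closure _).trans (isClosed_CD A).closure_subset

theorem IsHereditarilyLindelof.countable_diff_CD {B : Set X} (hB : IsHereditarilyLindelof B) :
    (B \ CD X B).Countable := by
  have hU : ∀ x ∈ B \ CD X B, ∃ U ∈ 𝓝 x, (U ∩ B).Countable := by
    rintro x ⟨-, hx⟩
    simpa [CD] using hx
  choose! U hUx hUB using hU
  obtain ⟨t, htc, htB, hcover⟩ :=
    (hB.isLindelof_subset sdiff_subset).elim_nhds_subcover U hUx
  refine (htc.biUnion fun x hx ↦ hUB x (htB x hx)).mono fun y hy ↦ ?_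
  obtain ⟨x, hxt, hyx⟩ := mem_iUnion₂.mp (hcover hy)
  exact mem_biUnion hxt ⟨hyx, hy.1⟩

theorem IsHereditarilyLindelof.not_countable_inter_CD {B : Set X}
    (hB : IsHereditarilyLindelof B) (hBc : ¬B.Countable) : ¬(B ∩ CD X B).Countable := fun hc ↦
  hBc <| sdiff_union_inter B (CD X B) ▸ hB.countable_diff_CD.union hc

theorem CD_subset_CD_CD_of_hereditarilyLindelof_mem_nhds
    (h : ∀ p : X, ∃ N ∈ 𝓝 p, IsHereditarilyLindelof N) (A : Set X) :
    CD X A ⊆ CD X (CD X A) := by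
  intro p hp U hU hc
  obtain ⟨N, hN, hNL⟩ := h p
  have hBL : IsHereditarilyLindelof (U ∩ N ∩ A) :=
    fun t ht ↦ hNL t (ht.trans fun _ hx ↦ hx.1.2)
  refine hBL.not_countable_inter_CD (hp _ (inter_mem hU hN)) (hc.mono ?_)
  rintro x ⟨hxB, hxCD⟩
  exact ⟨hxB.1.1, CD_mono inter_subset_right hxCD⟩

end TopologicalSpace

theorem TopologicalSpace.IsSeparable.isHereditarilyLindelof {X : Type*} [TopologicalSpace X]
    [PseudoMetrizableSpace X] {s : Set X} (hs : IsSeparable s) : IsHereditarilyLindelof s :=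
  fun _ ht ↦
    have := (hs.mono ht).secondCountableTopology
    IsLindelof.of_coe

theorem cd_idem_locallyCompact {X : Type*} [MetricSpace X]
    [LocallyCompactSpace X] (A : Set X) : CD X (CD X A) = CD X A := by
  refine (CD_CD_subset A).antisymm (CD_subset_CD_CD_of_hereditarilyLindelof_mem_nhds
    (fun p ↦ ?_) A)
  obtain ⟨K, hK, hKp⟩ := exists_compact_mem_nhds p
  exact ⟨K, hKp, hK.isSeparable.isHereditarilyLindelof⟩
end

section
/- There exists an uncountable closed subset A of ℓ∞ (the Banach space of bounded real sequences with the sup norm) such that CD(A) is a singleton and CD(CD(A)) = ∅; in particular A is totally imperfect (contains no nonempty perfect subset) and has condensation rank exactly 2. -/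
open Set Filter Metric Topology Function
open scoped lp ENNReal

section CondensationDerivative

variable {X : Type*} [TopologicalSpace X]

lemma CD_eq_empty_of_countable {A : Set X} (hA : A.Countable) : CD X A = ∅ :=
  eq_empty_of_forall_notMem fun _ hp => hp univ univ_mem (by rwa [univ_inter])

lemma CD_subset_derivedSet (A : Set X) : CD X A ⊆ derivedSet A := by
  intro x hx
  refine accPt_iff_nhds.2 fun U hU => ?_
  by_contra! h
  exact hx U hU ((countable_singleton x).mono fun y hy => h y hy)

lemma CDiter_zero (A : Set X) : CDiter X A 0 = A := by
  simp [CDiter, Ordinal.limitRecOn_zero]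

lemma CDiter_add_one (A : Set X) (o : Ordinal) :
    CDiter X A (o + 1) = CD X (CDiter X A o) := by
  simp [CDiter, Ordinal.limitRecOn_add_one]

lemma CDiter_limit (A : Set X) {o : Ordinal} (ho : Order.IsSuccLimit o) :
    CDiter X A o = ⋂ b : Iio o, CDiter X A b.1 := by
  simp [CDiter, Ordinal.limitRecOn_limit _ _ _ _ ho]

lemma CDiter_one (A : Set X) : CDiter X A 1 = CD X A := by
  rw [← zero_add (1 : Ordinal), CDiter_add_one, CDiter_zero]

lemma CDiter_two (A : Set X) : CDiter X A 2 = CD X (CD X A) := by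
  rw [← one_add_one_eq_two, CDiter_add_one, CDiter_one]

lemma CDiter_eq_empty_of_le {A : Set X} {α β : Ordinal} (hα : CDiter X A α = ∅) (hαβ : α ≤ β) :
    CDiter X A β = ∅ := by
  induction β using Ordinal.limitRecOn with
  | zero => rwa [← nonpos_iff_eq_zero.1 hαβ]
  | add_one o ih =>
    rcases hαβ.eq_or_lt with rfl | hlt
    · exact hα
    · rw [CDiter_add_one, ih (Order.lt_add_one_iff.1 hlt)]
      exact CD_eq_empty_of_countable countable_empty
  | limit o ho _ =>
    rcases hαβ.eq_or_lt with rfl | hlt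
    · exact hα
    · rw [CDiter_limit _ ho]
      exact eq_empty_of_subset_empty ((iInter_subset _ ⟨α, hlt⟩).trans hα.subset)

end CondensationDerivative

lemma Preperfect.eq_empty_of_subsingleton {X : Type*} [TopologicalSpace X] {P : Set X}
    (hP : Preperfect P) (hsub : P.Subsingleton) : P = ∅ := by
  refine eq_empty_of_forall_notMem fun x hx => ?_
  obtain ⟨y, ⟨-, hy⟩, hyx⟩ := accPt_iff_nhds.1 (hP x hx) univ univ_mem
  exact hyx (hsub hy hx)

section ShrinkingUnion

variable {X : Type*} [MetricSpace X] {p : X} {s : ℕ → Set X} {r : ℕ → ℝ}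

lemma isClosed_insert_iUnion_of_tendsto_radius (hs : ∀ m, IsClosed (s m))
    (hsr : ∀ m, s m ⊆ closedBall p (r m)) (hr : Tendsto r atTop (𝓝 0)) :
    IsClosed (insert p (⋃ m, s m)) := by
  refine closure_subset_iff_isClosed.1 fun x hx => ?_
  rcases eq_or_ne x p with rfl | hxp
  · exact mem_insert x _
  have hε : 0 < dist x p / 2 := half_pos (dist_pos.2 hxp)
  obtain ⟨N, hN⟩ := eventually_atTop.1 (hr.eventually (gt_mem_nhds hε))
  have hsub : insert p (⋃ m, s m) ⊆ closedBall p (dist x p / 2) ∪ ⋃ m ∈ Finset.range N, s m := by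
    rintro y (rfl | ⟨_, ⟨m, rfl⟩, hy⟩)
    · exact Or.inl (mem_closedBall_self hε.le)
    rcases lt_or_ge m N with hm | hm
    · exact Or.inr (mem_biUnion (Finset.mem_range.2 hm) hy)
    · exact Or.inl (closedBall_subset_closedBall (hN m hm).le (hsr m hy))
  have hclosed : IsClosed (closedBall p (dist x p / 2) ∪ ⋃ m ∈ Finset.range N, s m) :=
    isClosed_closedBall.union (isClosed_biUnion_finset fun m _ => hs m)
  rcases closure_minimal hsub hclosed hx with hball | hx'
  · exact absurd (mem_closedBall.1 hball) (by linarith)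
  · obtain ⟨m, -, hm⟩ := mem_iUnion₂.1 hx'
    exact mem_insert_of_mem p (mem_iUnion_of_mem m hm)

lemma mem_CD_insert_iUnion_of_tendsto_radius (hunc : ∀ m, ¬(s m).Countable)
    (hsr : ∀ m, s m ⊆ closedBall p (r m)) (hr : Tendsto r atTop (𝓝 0)) :
    p ∈ CD X (insert p (⋃ m, s m)) := by
  intro U hU hcount
  obtain ⟨ε, hε, hball⟩ := Metric.mem_nhds_iff.1 hU
  obtain ⟨m, hm⟩ := (hr.eventually (gt_mem_nhds hε)).exists
  refine hunc m (hcount.mono fun y hy => mem_inter (hball ?_) ?_)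
  · exact closedBall_subset_ball hm (hsr m hy)
  · exact mem_insert_of_mem p (mem_iUnion_of_mem m hy)

end ShrinkingUnion

lemma not_countable_range_of_injective_set_nat {β : Type*} {f : Set ℕ → β} (hf : Injective f) :
    ¬(range f).Countable := by
  intro h
  have : Countable (Set ℕ) := countable_univ_iff.mp
    (countable_of_injective_of_countable_image hf.injOn (by rwa [image_univ]))
  obtain ⟨g, hg⟩ := Countable.exists_injective_nat (Set ℕ)
  exact cantor_injective g hg

section IndicatorConst

variable {ι E : Type*} [NormedAddCommGroup E]

lemma lp.norm_apply_sub_le_dist (f g : ℓ^∞(ι, E)) (i : ι) : ‖f i - g i‖ ≤ dist f g := by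
  simpa [dist_eq_norm] using lp.norm_apply_le_norm ENNReal.top_ne_zero (f - g) i

noncomputable def indicatorConstLinfty (S : Set ι) (c : E) : ℓ^∞(ι, E) :=
  ⟨S.indicator fun _ => c, memℓp_infty ⟨‖c‖, by
    rintro _ ⟨i, rfl⟩
    exact norm_indicator_le_norm_self (fun _ => c) i⟩⟩

@[simp]
lemma indicatorConstLinfty_apply (S : Set ι) (c : E) (i : ι) :
    indicatorConstLinfty S c i = S.indicator (fun _ => c) i := rfl

lemma norm_indicatorConstLinfty_le (S : Set ι) (c : E) : ‖indicatorConstLinfty S c‖ ≤ ‖c‖ :=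
  lp.norm_le_of_forall_le (norm_nonneg c) fun i => norm_indicator_le_norm_self (fun _ => c) i

lemma norm_le_dist_indicatorConstLinfty {S T : Set ι} (hST : S ≠ T) (c : E) :
    ‖c‖ ≤ dist (indicatorConstLinfty S c) (indicatorConstLinfty T c) := by
  obtain ⟨i, hi⟩ : ∃ i, ¬(i ∈ S ↔ i ∈ T) := by
    by_contra! h
    exact hST (ext h)
  refine le_trans ?_ (lp.norm_apply_sub_le_dist _ _ i)
  by_cases hS : i ∈ S
  · have hT : i ∉ T := by tauto
    simp [hS, hT]
  · have hT : i ∈ T := by tauto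
    simp [hS, hT]

lemma injective_indicatorConstLinfty {c : E} (hc : c ≠ 0) :
    Injective fun S : Set ι => indicatorConstLinfty S c := by
  intro S T hST
  simp only at hST
  by_contra hne
  have := norm_le_dist_indicatorConstLinfty hne c
  rw [hST, dist_self] at this
  exact hc (norm_le_zero_iff.1 this)

end IndicatorConst

noncomputable def rankTwoLayer (m : ℕ) : Set ℓ^∞(ℕ, ℝ) :=
  range fun S : Set ℕ => indicatorConstLinfty S (1 / ((m : ℝ) + 1))

noncomputable def rankTwoSet : Set ℓ^∞(ℕ, ℝ) :=
  insert 0 (⋃ m, rankTwoLayer m)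

lemma rankTwoLayer_subset_closedBall (m : ℕ) :
    rankTwoLayer m ⊆ closedBall 0 (1 / ((m : ℝ) + 1)) := by
  rintro _ ⟨S, rfl⟩
  have := norm_indicatorConstLinfty_le S (1 / ((m : ℝ) + 1))
  rwa [Real.norm_of_nonneg (by positivity), ← mem_closedBall_zero_iff] at this

lemma isClosed_rankTwoLayer (m : ℕ) : IsClosed (rankTwoLayer m) := by
  refine isClosed_of_pairwise_le_dist (ε := 1 / ((m : ℝ) + 1)) (by positivity) ?_
  rintro _ ⟨S, rfl⟩ _ ⟨T, rfl⟩ hne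
  have := norm_le_dist_indicatorConstLinfty (fun h : S = T => hne (by rw [h])) (1 / ((m : ℝ) + 1))
  rwa [Real.norm_of_nonneg (by positivity)] at this

lemma not_countable_rankTwoLayer (m : ℕ) : ¬(rankTwoLayer m).Countable :=
  not_countable_range_of_injective_set_nat (injective_indicatorConstLinfty (by positivity))

lemma isClosed_rankTwoSet : IsClosed rankTwoSet :=
  isClosed_insert_iUnion_of_tendsto_radius isClosed_rankTwoLayer rankTwoLayer_subset_closedBall
    tendsto_one_div_add_atTop_nhds_zero_nat

lemma zero_mem_CD_rankTwoSet : (0 : ℓ^∞(ℕ, ℝ)) ∈ CD _ rankTwoSet :=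
  mem_CD_insert_iUnion_of_tendsto_radius not_countable_rankTwoLayer rankTwoLayer_subset_closedBall
    tendsto_one_div_add_atTop_nhds_zero_nat

lemma one_div_mul_le_abs_one_div_sub_one_div {m k : ℕ} (hkm : k ≠ m) :
    1 / (((m : ℝ) + 1) * ((m : ℝ) + 2)) ≤ |1 / ((m : ℝ) + 1) - 1 / ((k : ℝ) + 1)| := by
  rcases lt_or_gt_of_ne hkm with h | h
  · have hk : (k : ℝ) + 1 ≤ m := by exact_mod_cast h
    rw [abs_sub_comm, abs_of_nonneg (sub_nonneg.2 (one_div_le_one_div_of_le (by positivity)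
      (by linarith))), div_sub_div _ _ (by positivity) (by positivity),
      div_le_div_iff₀ (by positivity) (by positivity)]
    nlinarith [mul_nonneg (by linarith : (0 : ℝ) ≤ m - k - 1)
        (by positivity : (0 : ℝ) ≤ (m + 1) * (m + 2)),
      mul_nonneg (by linarith : (0 : ℝ) ≤ m + 1 - k) (by positivity : (0 : ℝ) ≤ m + 1)]
  · have hm : (m : ℝ) + 1 ≤ k := by exact_mod_cast h
    rw [abs_of_nonneg (sub_nonneg.2 (one_div_le_one_div_of_le (by positivity)
      (by linarith))), div_sub_div _ _ (by positivity) (by positivity),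
      div_le_div_iff₀ (by positivity) (by positivity)]
    nlinarith [mul_nonneg (by linarith : (0 : ℝ) ≤ k - m - 1)
      (by positivity : (0 : ℝ) ≤ (m + 1) * (m + 1))]

lemma one_div_mul_le_dist_of_mem_rankTwoSet {m : ℕ} {S : Set ℕ} (hS : S.Nonempty)
    {z : ℓ^∞(ℕ, ℝ)} (hz : z ∈ rankTwoSet) (hne : z ≠ indicatorConstLinfty S (1 / ((m : ℝ) + 1))) :
    1 / (((m : ℝ) + 1) * ((m : ℝ) + 2)) ≤ dist (indicatorConstLinfty S (1 / ((m : ℝ) + 1))) z := by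
  have hnorm : ‖1 / ((m : ℝ) + 1)‖ = 1 / ((m : ℝ) + 1) := Real.norm_of_nonneg (by positivity)
  have hgap : 1 / (((m : ℝ) + 1) * ((m : ℝ) + 2)) ≤ 1 / ((m : ℝ) + 1) :=
    one_div_le_one_div_of_le (by positivity) (by nlinarith)
  -- Compare with `z` at a coordinate `i ∈ S`, where `z i` is `0` or some `1 / (k + 1)`.
  obtain ⟨i, hi⟩ := hS
  have hcoord := lp.norm_apply_sub_le_dist (indicatorConstLinfty S (1 / ((m : ℝ) + 1))) z i
  rcases hz with rfl | ⟨_, ⟨k, rfl⟩, T, rfl⟩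
  · simp only [indicatorConstLinfty_apply, indicator_of_mem hi, lp.coeFn_zero, Pi.zero_apply,
      sub_zero, hnorm] at hcoord
    exact hgap.trans hcoord
  rcases eq_or_ne k m with rfl | hkm
  · have hST : S ≠ T := fun h => hne (by rw [h])
    have := norm_le_dist_indicatorConstLinfty hST (1 / ((k : ℝ) + 1))
    rw [hnorm] at this
    exact hgap.trans this
  by_cases hiT : i ∈ T
  · simp only [indicatorConstLinfty_apply, indicator_of_mem hi, indicator_of_mem hiT,
      Real.norm_eq_abs] at hcoord
    exact (one_div_mul_le_abs_one_div_sub_one_div hkm).trans hcoord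
  · simp only [indicatorConstLinfty_apply, indicator_of_mem hi, indicator_of_notMem hiT,
      sub_zero, hnorm] at hcoord
    exact hgap.trans hcoord

lemma derivedSet_rankTwoSet_subset : derivedSet rankTwoSet ⊆ {0} := by
  intro x hx
  have hxA : x ∈ rankTwoSet := (isClosed_iff_derivedSet_subset _).1 isClosed_rankTwoSet hx
  by_contra hx0
  rcases hxA with rfl | ⟨_, ⟨m, rfl⟩, S, rfl⟩
  · exact hx0 rfl
  have hS : S.Nonempty := by
    refine nonempty_iff_ne_empty.2 fun hS => hx0 ?_
    ext i
    simp [hS]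
  obtain ⟨y, ⟨hy, hyA⟩, hyx⟩ := accPt_iff_nhds.1 hx _
    (ball_mem_nhds _ (by positivity : 0 < 1 / (((m : ℝ) + 1) * ((m : ℝ) + 2))))
  exact (one_div_mul_le_dist_of_mem_rankTwoSet hS hyA hyx).not_gt (mem_ball'.1 hy)

lemma CD_rankTwoSet : CD _ rankTwoSet = {0} :=
  ((CD_subset_derivedSet _).trans derivedSet_rankTwoSet_subset).antisymm
    (singleton_subset_iff.2 zero_mem_CD_rankTwoSet)

theorem exists_rank_two_set_linfty :
    ∃ A : Set (lp (fun _ : ℕ => ℝ) ⊤), IsClosed A ∧ ¬A.Countable ∧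
      (∃ p, CD _ A = {p}) ∧ CD _ (CD _ A) = ∅ ∧
      (∀ P ⊆ A, Perfect P → P = ∅) ∧
      CDiter _ A 1 ≠ CDiter _ A 2 ∧
      (∀ α : Ordinal, 2 ≤ α → CDiter _ A α = CDiter _ A 2) := by
  have hCD2 : CD _ (CD _ rankTwoSet) = ∅ := by
    rw [CD_rankTwoSet]
    exact CD_eq_empty_of_countable (countable_singleton 0)
  refine ⟨rankTwoSet, isClosed_rankTwoSet, ?_, ⟨0, CD_rankTwoSet⟩, hCD2, ?_, ?_, ?_⟩
  · exact fun h => not_countable_rankTwoLayer 0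
      (h.mono fun _ hx => mem_insert_of_mem 0 (mem_iUnion_of_mem 0 hx))
  · intro P hPA hP
    refine hP.acc.eq_empty_of_subsingleton ((subsingleton_singleton (a := 0)).anti ?_)
    exact (preperfect_iff_subset_derivedSet.1 hP.acc).trans
      ((derivedSet_mono _ _ hPA).trans derivedSet_rankTwoSet_subset)
  · rw [CDiter_one, CDiter_two, hCD2, CD_rankTwoSet]
    exact singleton_ne_empty 0
  · intro α hα
    rw [CDiter_eq_empty_of_le (hCD2 ▸ CDiter_two _) hα, CDiter_two, hCD2]
end
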